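/- Let (X, δ) be a diversity. For every finite Y ⊆ X and every f ∈ T_X, δ_T(κ(Y) ∪ {f}) = f(Y), where κ(x) = h_x with h_x(A) = δ(A ∪ {x}). -/

import Mathlib

open scoped Classical

noncomputable section

/-- A diversity: axioms (D1) and (D2). -/
def IsDiversity {X : Type*} (δ : Finset X → ℝ) : Prop :=
  (∀ A, 0 ≤ δ A) ∧ (∀ A, δ A = 0 ↔ A.card ≤ 1) ∧
    ∀ A B C : Finset X, B ≠ ∅ → δ (A ∪ C) ≤ δ (A ∪ B) + δ (B ∪ C)

/-- Membership in `P_X`: `f ∅ = 0` and `Σ_{A ∈ 𝓐} f A ≥ δ (⋃ 𝓐)` for every finite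
collection `𝓐` of finite subsets of `X`. -/
def MemP {X : Type*} (δ : Finset X → ℝ) (f : Finset X → ℝ) : Prop :=
  f ∅ = 0 ∧ ∀ 𝓐 : Finset (Finset X), δ (𝓐.sup id) ≤ ∑ A ∈ 𝓐, f A

/-- Membership in the tight span `T_X`: the pointwise-minimal elements of `P_X`. -/
def MemT {X : Type*} (δ : Finset X → ℝ) (f : Finset X → ℝ) : Prop :=
  MemP δ f ∧ ∀ g : Finset X → ℝ, MemP δ g → (∀ A, g A ≤ f A) → g = f

/-- The function `δ_T` on finite subsets of the tight span: `δ_T ∅ = 0` and for nonempty `F`,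
`δ_T F = sup { δ(⋃𝓐) - Σ_{A ∈ 𝓐} inf_{f ∈ F} f A : 𝓐 a finite collection of finite subsets }`. -/
noncomputable def deltaT {X : Type*} (δ : Finset X → ℝ) (F : Finset (Finset X → ℝ)) : ℝ :=
  if F = ∅ then 0
  else sSup {r : ℝ | ∃ 𝓐 : Finset (Finset X),
    r = δ (𝓐.sup id) - ∑ A ∈ 𝓐, sInf ((fun f => f A) '' (F : Set (Finset X → ℝ)))}

/-- The Kuratowski-type map `κ` sends `x` to the function `h_x : A ↦ δ (A ∪ {x})`. -/
def hfun {X : Type*} (δ : Finset X → ℝ) (x : X) : Finset X → ℝ :=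
  fun A => δ (A ∪ {x})

/-!
Write `m A` for the minimum of `f A` and of the `δ (A ∪ {y})`, `y ∈ Y`, i.e. the infimum over
`κ(Y) ∪ {f}`. For the upper bound, in a collection `𝓐` the blocks with `m A = f A` are merged with
`Y` using `f ∈ P_X`, and every other block is attached to `Y` by the triangle inequality through
its point `y ∈ Y`; so `δ (⋃ 𝓐) ≤ f Y + Σ m A`. For the lower bound, minimality of `f` yields
collections with `δ (Y ∪ ⋃ 𝓐) - Σ f A` arbitrarily close to `f Y`, since otherwise
`Function.update f Y (f Y - ε)` would still lie in `P_X`; adding the singletons `{y}`, `y ∈ Y`,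
which have `m {y} = 0`, makes them collections in the supremum defining `δ_T`.
-/

namespace IsDiversity

variable {X : Type*} {δ : Finset X → ℝ}

theorem apply_singleton (hδ : IsDiversity δ) (x : X) : δ {x} = 0 :=
  (hδ.2.1 {x}).2 (by simp)

theorem apply_empty (hδ : IsDiversity δ) : δ ∅ = 0 :=
  (hδ.2.1 ∅).2 (by simp)

theorem monotone (hδ : IsDiversity δ) : Monotone δ := by
  refine Finset.monotone_iff_forall_le_insert.2 fun A x _ => ?_
  have h := hδ.2.2 A {x} ∅ (Finset.singleton_ne_empty x)
  rwa [Finset.union_empty, Finset.union_empty, hδ.apply_singleton, add_zero, Finset.union_comm,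
    ← Finset.insert_eq] at h

theorem union_le_of_mem (hδ : IsDiversity δ) {S : Finset X} {y : X} (hy : y ∈ S) (A : Finset X) :
    δ (S ∪ A) ≤ δ S + δ (A ∪ {y}) := by
  simpa [Finset.union_comm A, Finset.insert_eq_of_mem hy] using hδ.2.2 S {y} A (by simp)

end IsDiversity

namespace MemP

variable {X : Type*} {δ : Finset X → ℝ} {f : Finset X → ℝ}

theorem le (hf : MemP δ f) (A : Finset X) : δ A ≤ f A := by
  simpa using hf.2 {A}

theorem nonneg (hδ : IsDiversity δ) (hf : MemP δ f) (A : Finset X) : 0 ≤ f A :=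
  (hδ.1 A).trans (hf.le A)

theorem sum_insert_le (hδ : IsDiversity δ) (hf : MemP δ f) (A : Finset X)
    (𝓒 : Finset (Finset X)) : ∑ B ∈ insert A 𝓒, f B ≤ f A + ∑ B ∈ 𝓒, f B := by
  by_cases hA : A ∈ 𝓒
  · rw [Finset.insert_eq_of_mem hA]
    linarith [hf.nonneg hδ A]
  · rw [Finset.sum_insert hA]

theorem union_sup_le (hδ : IsDiversity δ) (hf : MemP δ f) (Y : Finset X)
    (𝓒 : Finset (Finset X)) : δ (Y ∪ 𝓒.sup id) ≤ f Y + ∑ A ∈ 𝓒, f A := by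
  have h := hf.2 (insert Y 𝓒)
  rw [Finset.sup_insert] at h
  exact h.trans (hf.sum_insert_le hδ Y 𝓒)

theorem union_sup_union_sup_le (hδ : IsDiversity δ) (hf : MemP δ f) {Y : Finset X}
    {w : Finset X → ℝ} (hw : ∀ A, w A = f A ∨ ∃ y ∈ Y, w A = δ (A ∪ {y}))
    (𝓐 𝓒 : Finset (Finset X)) :
    δ (Y ∪ 𝓒.sup id ∪ 𝓐.sup id) ≤ f Y + ∑ A ∈ 𝓒, f A + ∑ A ∈ 𝓐, w A := by
  induction 𝓐 using Finset.induction_on generalizing 𝓒 with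
  | empty => simpa using hf.union_sup_le hδ Y 𝓒
  | @insert A 𝓐 hA ih =>
    rw [Finset.sup_insert, Finset.sum_insert hA]
    rcases hw A with hwA | ⟨y, hy, hwA⟩
    · have h := ih (insert A 𝓒)
      rw [Finset.sup_insert] at h
      have hset : Y ∪ (id A ⊔ 𝓒.sup id) ∪ 𝓐.sup id = Y ∪ 𝓒.sup id ∪ (id A ⊔ 𝓐.sup id) := by
        simp only [Finset.sup_eq_union]; ac_rfl
      rw [hset] at h
      linarith [hf.sum_insert_le hδ A 𝓒]
    · have hyS : y ∈ Y ∪ 𝓒.sup id ∪ 𝓐.sup id := by simp [hy]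
      have hset : Y ∪ 𝓒.sup id ∪ (id A ⊔ 𝓐.sup id) = Y ∪ 𝓒.sup id ∪ 𝓐.sup id ∪ A := by
        simp only [Finset.sup_eq_union, id]; ac_rfl
      rw [hset]
      linarith [hδ.union_le_of_mem hyS A, ih 𝓒]

theorem sup_le_add_sum (hδ : IsDiversity δ) (hf : MemP δ f) {Y : Finset X}
    {w : Finset X → ℝ} (hw : ∀ A, w A = f A ∨ ∃ y ∈ Y, w A = δ (A ∪ {y}))
    (𝓐 : Finset (Finset X)) : δ (𝓐.sup id) ≤ f Y + ∑ A ∈ 𝓐, w A := by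
  have h := hf.union_sup_union_sup_le hδ hw 𝓐 ∅
  simp only [Finset.sup_empty, Finset.bot_eq_empty, Finset.union_empty, Finset.sum_empty,
    add_zero] at h
  exact (hδ.monotone Finset.subset_union_right).trans h

theorem update (hf : MemP δ f) {Y : Finset X} (hY : Y ≠ ∅) {c : ℝ}
    (hc : ∀ 𝓐 : Finset (Finset X), δ (Y ∪ 𝓐.sup id) ≤ c + ∑ A ∈ 𝓐, f A) :
    MemP δ (Function.update f Y c) := by
  refine ⟨by rw [Function.update_of_ne hY.symm, hf.1], fun 𝓑 => ?_⟩
  by_cases hY𝓑 : Y ∈ 𝓑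
  · rw [Finset.sum_update_of_mem hY𝓑]
    convert hc (𝓑 \ {Y}) using 2
    conv_lhs => rw [← Finset.insert_erase hY𝓑]
    rw [Finset.sup_insert, Finset.sdiff_singleton_eq_erase]
    rfl
  · rw [Finset.sum_update_of_notMem hY𝓑]
    exact hf.2 𝓑

end MemP

namespace MemT

variable {X : Type*} {δ : Finset X → ℝ} {f : Finset X → ℝ}

theorem exists_sub_lt (hδ : IsDiversity δ) (hf : MemT δ f) (Y : Finset X) {ε : ℝ}
    (hε : 0 < ε) : ∃ 𝓐 : Finset (Finset X), f Y - ε < δ (Y ∪ 𝓐.sup id) - ∑ A ∈ 𝓐, f A := by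
  by_contra! h
  have hY : Y ≠ ∅ := by
    rintro rfl
    have := h ∅
    simp only [Finset.sup_empty, Finset.bot_eq_empty, Finset.union_empty, Finset.sum_empty,
      hδ.apply_empty, hf.1.1] at this
    linarith
  have hle : ∀ A, Function.update f Y (f Y - ε) A ≤ f A := by
    intro A
    rcases eq_or_ne A Y with rfl | hA
    · simp [hε.le]
    · simp [hA]
  have heq := congrFun (hf.2 _ (hf.1.update hY fun 𝓐 => by linarith [h 𝓐]) hle) Y
  simp only [Function.update_self] at heq
  linarith

end MemT

section deltaT

variable {X : Type*} {δ : Finset X → ℝ}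

theorem deltaT_eq_iSup {F : Finset (Finset X → ℝ)} (hF : F.Nonempty) :
    deltaT δ F = ⨆ 𝓐 : Finset (Finset X), (δ (𝓐.sup id) - ∑ A ∈ 𝓐, F.inf' hF (· A)) := by
  rw [deltaT, if_neg hF.ne_empty, iSup]
  congr 1
  ext r
  simp [Finset.inf'_eq_csInf_image, eq_comm]

theorem inf'_insert_image_hfun_eq (Y : Finset X) (f : Finset X → ℝ) (A : Finset X) :
    (insert f (Y.image (hfun δ))).inf' (Finset.insert_nonempty _ _) (· A) = f A ∨
      ∃ y ∈ Y, (insert f (Y.image (hfun δ))).inf' (Finset.insert_nonempty _ _) (· A) =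
        δ (A ∪ {y}) := by
  obtain ⟨g, hg, hgA⟩ := Finset.exists_mem_eq_inf' (Finset.insert_nonempty f (Y.image (hfun δ)))
    (· A)
  rw [hgA]
  rcases Finset.mem_insert.1 hg with rfl | hg
  · exact Or.inl rfl
  · obtain ⟨y, hy, rfl⟩ := Finset.mem_image.1 hg
    exact Or.inr ⟨y, hy, rfl⟩

theorem sub_sum_le_sub_sum_inf' (hδ : IsDiversity δ) {F : Finset (Finset X → ℝ)}
    (hF : F.Nonempty) {f : Finset X → ℝ} (hf : f ∈ F) {Y : Finset X}
    (hY : ∀ y ∈ Y, hfun δ y ∈ F) (𝓐 : Finset (Finset X)) :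
    δ (Y ∪ 𝓐.sup id) - ∑ A ∈ 𝓐, f A ≤
      δ ((𝓐 ∪ Y.image singleton).sup id) - ∑ A ∈ 𝓐 ∪ Y.image singleton, F.inf' hF (· A) := by
  have hsup : (𝓐 ∪ Y.image singleton).sup id = Y ∪ 𝓐.sup id := by
    rw [Finset.sup_union, Finset.sup_image, Function.id_comp, Finset.sup_singleton_eq_self,
      Finset.sup_eq_union, Finset.union_comm]
  have hsingletons : ∑ B ∈ (𝓐 ∪ Y.image singleton) \ 𝓐, F.inf' hF (· B) ≤ 0 := by
    refine Finset.sum_nonpos fun B hB => ?_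
    obtain ⟨hB𝓐Y, hB𝓐⟩ := Finset.mem_sdiff.1 hB
    obtain ⟨y, hy, rfl⟩ := Finset.mem_image.1 ((Finset.mem_union.1 hB𝓐Y).resolve_left hB𝓐)
    calc F.inf' hF (· {y}) ≤ hfun δ y {y} := Finset.inf'_le _ (hY y hy)
      _ = 0 := by rw [hfun, Finset.union_self, hδ.apply_singleton]
  have hblocks : ∑ A ∈ 𝓐, F.inf' hF (· A) ≤ ∑ A ∈ 𝓐, f A :=
    Finset.sum_le_sum fun A _ => Finset.inf'_le _ hf
  rw [hsup, ← Finset.sum_sdiff Finset.subset_union_left]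
  linarith

end deltaT

/-- for every finite `Y ⊆ X` and `f ∈ T_X`, `δ_T (κ(Y) ∪ {f}) = f Y`. -/
theorem deltaT_kappa_insert {X : Type*} (δ : Finset X → ℝ) (hδ : IsDiversity δ)
    (Y : Finset X) (f : Finset X → ℝ) (hf : MemT δ f) :
    deltaT δ (insert f (Y.image (hfun δ))) = f Y := by
  have hF := Finset.insert_nonempty f (Y.image (hfun δ))
  have hupper : ∀ 𝓐 : Finset (Finset X),
      δ (𝓐.sup id) - ∑ A ∈ 𝓐, (insert f (Y.image (hfun δ))).inf' hF (· A) ≤ f Y :=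
    fun 𝓐 => sub_le_iff_le_add.2 (hf.1.sup_le_add_sum hδ (inf'_insert_image_hfun_eq Y f) 𝓐)
  rw [deltaT_eq_iSup hF]
  refine le_antisymm (ciSup_le hupper) (le_of_forall_sub_le fun ε hε => ?_)
  obtain ⟨𝓐, h𝓐⟩ := hf.exists_sub_lt hδ Y hε
  have hlower := sub_sum_le_sub_sum_inf' hδ hF (Finset.mem_insert_self f _)
    (fun y hy => Finset.mem_insert_of_mem (Finset.mem_image_of_mem _ hy)) 𝓐
  exact h𝓐.le.trans (hlower.trans (le_ciSup ⟨f Y, Set.forall_mem_range.2 hupper⟩ _))
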